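/- Let (V(k))_{k∈ℕ} be a sequence of nonnegative reals with V(k) ≥ κ·2^{2k−1}·2^{−kn} for all k (where κ > 0, n ∈ ℕ), and suppose that for all j ≥ 0 with k₁+2j < k₂−2j one has V(k₁,k₂) > 2^{4nj}·V(k₁+2j, k₂−2j), where V(a,b) := Σ_{k=a}^{b−1} V(k). If k₂ − k₁ ≥ K and j ≈ (k₂−k₁)/4, then V(k₁,k₂) ≥ 2^{n(k₂−k₁)}·κ·2^{2m−1−mn} for some m with k₁ ≤ m ≤ k₂; in particular if V(k₁,k₂) is bounded by a fixed finite total volume for all k₁ < k₂, then for each k₁, k₂ large there exist k₁' , k₂' with k₁ ≤ k₁' < k₂' ≤ k₂ and V(k₁',k₂') ≤ 2^{4n}·V(k₁'+2, k₂'−2). -/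

import Mathlib

/-- The "annulus volume" `V(a,b) = Σ_{k=a}^{b-1} V(k)`. -/
def annVol (V : ℕ → ℝ) (a b : ℕ) : ℝ := ∑ k ∈ Finset.Ico a b, V k

/-!
If no pair `k₁ ≤ a < b ≤ 3k₁` has the doubling property, the reversed inequality
`2^{4n} V(a+2, b-2) ≤ V(a, b)` can be iterated `j ≈ k₁/2` times from `(k₁, 3k₁)` inward, so
`V(k₁, 3k₁) ≥ 2^{4nj} V(m)` with `m = k₁ + 2j`. The non-collapsing bound
`2^{mn} V(m) ≥ (κ/2) 4^m` and `mn ≤ 4nj + 2n` then give `2^{2n} V(k₁, 3k₁) ≥ (κ/2) 4^{k₁}`,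
which exceeds any fixed bound on the total volume once `k₁` is large.
-/

theorem pow_mul_le_of_forall_mul_succ_le {R : Type*} [Semiring R] [PartialOrder R]
    [IsOrderedRing R] {u : ℕ → R} {c : R} (hc : 0 ≤ c) {j : ℕ}
    (h : ∀ i < j, c * u (i + 1) ≤ u i) : c ^ j * u j ≤ u 0 := by
  induction j with
  | zero => simp
  | succ j ih =>
    calc c ^ (j + 1) * u (j + 1) = c ^ j * (c * u (j + 1)) := by rw [pow_succ, mul_assoc]
      _ ≤ c ^ j * u j := mul_le_mul_of_nonneg_left (h j j.lt_succ_self) (pow_nonneg hc j)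
      _ ≤ u 0 := ih fun i hi => h i (hi.trans j.lt_succ_self)

theorem le_annVol_of_lt {V : ℕ → ℝ} (hV : ∀ k, 0 ≤ V k) {a b : ℕ} (hab : a < b) :
    V a ≤ annVol V a b :=
  Finset.single_le_sum (fun k _ => hV k) (Finset.mem_Ico.mpr ⟨le_rfl, hab⟩)

theorem half_mul_four_pow_le_of_le {κ x : ℝ} {k n : ℕ}
    (h : κ * (2:ℝ) ^ (2 * (k:ℤ) - 1) * (2:ℝ) ^ (-((k * n : ℕ) : ℤ)) ≤ x) :
    κ / 2 * 4 ^ k ≤ 2 ^ (k * n) * x := by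
  have h2 : (2:ℝ) ^ (2 * (k:ℤ) - 1) = 4 ^ k / 2 := by
    rw [zpow_sub₀ two_ne_zero, zpow_mul, zpow_natCast, zpow_one]; norm_num
  rw [h2, zpow_neg, zpow_natCast, ← div_eq_mul_inv, div_le_iff₀ (by positivity)] at h
  linarith [mul_comm x (2 ^ (k * n))]

theorem half_mul_four_pow_le_annVol_of_not_doubling {n k₁ : ℕ} {κ : ℝ} (hκ : 0 ≤ κ)
    {V : ℕ → ℝ} (hV : ∀ k, 0 ≤ V k) (hlow : ∀ k, κ / 2 * 4 ^ k ≤ 2 ^ (k * n) * V k)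
    (hk₁ : 1 ≤ k₁)
    (hnot : ∀ a b, k₁ ≤ a → a + 4 ≤ b → b ≤ 3 * k₁ →
      2 ^ (4 * n) * annVol V (a + 2) (b - 2) ≤ annVol V a b) :
    κ / 2 * 4 ^ k₁ ≤ 2 ^ (2 * n) * annVol V k₁ (3 * k₁) := by
  set j := (k₁ - 1) / 2
  set m := k₁ + 2 * j
  have hiter : (2 ^ (4 * n)) ^ j * annVol V m (3 * k₁ - 2 * j) ≤ annVol V k₁ (3 * k₁) :=
    pow_mul_le_of_forall_mul_succ_le (u := fun i => annVol V (k₁ + 2 * i) (3 * k₁ - 2 * i))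
      (by positivity) fun i hi => by
        have := hnot (k₁ + 2 * i) (3 * k₁ - 2 * i) le_self_add (by omega) (by omega)
        rwa [show k₁ + 2 * i + 2 = k₁ + 2 * (i + 1) by ring,
          show 3 * k₁ - 2 * i - 2 = 3 * k₁ - 2 * (i + 1) by omega] at this
  have hexp : (2:ℝ) ^ (m * n) ≤ 2 ^ (2 * n) * (2 ^ (4 * n)) ^ j := by
    rw [← pow_mul, ← pow_add]
    refine pow_le_pow_right₀ one_le_two ?_
    calc m * n ≤ (2 + 4 * j) * n := Nat.mul_le_mul_right n (by omega)
      _ = 2 * n + 4 * n * j := by ring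
  calc κ / 2 * 4 ^ k₁ ≤ κ / 2 * 4 ^ m := by gcongr <;> norm_num [m]
    _ ≤ 2 ^ (m * n) * V m := hlow m
    _ ≤ 2 ^ (2 * n) * (2 ^ (4 * n)) ^ j * annVol V m (3 * k₁ - 2 * j) := by
      gcongr
      · exact hV m
      · exact le_annVol_of_lt hV (by omega)
    _ ≤ 2 ^ (2 * n) * annVol V k₁ (3 * k₁) := by
      rw [mul_assoc]; gcongr

/-- (Volume doubling selection argument.) Let `V k ≥ 0` be
the volumes of dyadic annuli, satisfying the non-collapsing lower bound
`V k ≥ κ · 2^{2k-1} · 2^{-kn}` and whose partial sums `V(k₁,k₂)` are all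
bounded by a fixed finite total volume. Then for `k₁` large (and
`k₂ ≈ 3 k₁`, as in Cao–Zhu's choice `k₁ ≈ K/2`, `k₂ ≈ 3K/2`) there is a pair
`k₁ ≤ a < b ≤ k₂` with the volume doubling property
`V(a,b) ≤ 2^{4n} · V(a+2, b-2)`; otherwise iterating the failed doubling
inequality `V(k₁,k₂) > 2^{4nj} V(k₁+2j, k₂-2j)` for `j ≈ (k₂-k₁)/4` would force
`V(k₁,k₂) ≥ 2^{n(k₂-k₁)} · κ · 2^{2m-1-mn}`, contradicting finite volume. -/
theorem volume_doubling_pair_exists (n : ℕ) (κ Vtot : ℝ) (hκ : 0 < κ)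
    (V : ℕ → ℝ) (hVnn : ∀ k, 0 ≤ V k)
    (hlow : ∀ k : ℕ, κ * (2:ℝ) ^ (2 * (k:ℤ) - 1) * (2:ℝ) ^ (-((k * n : ℕ) : ℤ)) ≤ V k)
    (hbdd : ∀ a b : ℕ, annVol V a b ≤ Vtot) :
    ∃ K₀ : ℕ, ∀ k₁ k₂ : ℕ, K₀ ≤ k₁ → k₂ = 3 * k₁ →
      ∃ a b : ℕ, k₁ ≤ a ∧ a + 4 ≤ b ∧ b ≤ k₂ ∧
        annVol V a b ≤ 2 ^ (4 * n) * annVol V (a + 2) (b - 2) := by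
  obtain ⟨N, hN⟩ :=
    pow_unbounded_of_one_lt (2 ^ (2 * n) * Vtot / (κ / 2)) (by norm_num : (1:ℝ) < 4)
  refine ⟨N + 1, fun k₁ k₂ hk₁ hk₂ => ?_⟩
  by_contra! hnot
  subst hk₂
  have hvol := half_mul_four_pow_le_annVol_of_not_doubling hκ.le hVnn
    (fun k => half_mul_four_pow_le_of_le (hlow k)) (by omega)
    (fun a b ha hab hb => (hnot a b ha hab hb).le)
  have hN' : 2 ^ (2 * n) * Vtot < κ / 2 * 4 ^ k₁ := by
    rw [div_lt_iff₀' (by positivity)] at hN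
    exact hN.trans_le (by gcongr <;> [norm_num; omega])
  have hbdd' := mul_le_mul_of_nonneg_left (hbdd k₁ (3 * k₁)) (by positivity : (0:ℝ) ≤ 2 ^ (2 * n))
  linarith
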